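/- Let (α_1, α_2, α_3, …) be a strictly increasing sequence of positive integers and for each n ≥ 1 let X^{(α)}_n be the rooted tree of depth n in which every vertex at distance i < n from the root has exactly α_{i+1} children and the vertices at distance n are leaves. Then the proportion of eigenvalues of the adjacency matrix of X^{(α)}_n equal to zero tends to 1: the dimension of the kernel of A(X^{(α)}_n), divided by the number of vertices of X^{(α)}_n, converges to 1 as n → ∞. -/

import Mathlib

open Polynomial

/-- Vertices of the rooted tree of depth `r` in which each vertex at depth `i < r`
has `b i` children: a vertex is a word assigning to each position `i < m ≤ r`
a letter in `Fin (b i)`; the empty word (`m = 0`) is the root, and the depth of a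
vertex is its length `m`. -/
abbrev BVertex (b : ℕ → ℕ) (r : ℕ) := Σ m : Fin (r + 1), (i : Fin (m : ℕ)) → Fin (b i)

/-- `y` is a child of `x`: the word `y` extends the word `x` by one letter. -/
def BExt {b : ℕ → ℕ} {r : ℕ} (x y : BVertex b r) : Prop :=
  ∃ h : (y.1 : ℕ) = (x.1 : ℕ) + 1,
    ∀ i : Fin (x.1 : ℕ), y.2 ⟨(i : ℕ), by have := i.isLt; omega⟩ = x.2 i

/-- Adjacency in the rooted tree: the parent/child relation. -/
def BAdj {b : ℕ → ℕ} {r : ℕ} (x y : BVertex b r) : Prop := BExt x y ∨ BExt y x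

open Classical in
/-- Adjacency matrix of the rooted tree with branching sequence `b` and depth `r`. -/
noncomputable def BAdjMatrix (b : ℕ → ℕ) (r : ℕ) : Matrix (BVertex b r) (BVertex b r) ℝ :=
  fun x y => if BAdj x y then 1 else 0

/-- `lam` is an eigenvalue of the adjacency matrix of the tree. -/
def IsAdjEigenvalue (b : ℕ → ℕ) (r : ℕ) (lam : ℝ) : Prop :=
  ∃ v : BVertex b r → ℝ, v ≠ 0 ∧ (BAdjMatrix b r).mulVec v = lam • v

/-- Dimension of the `lam`-eigenspace of the adjacency matrix of the tree. -/
noncomputable def adjEigDim (b : ℕ → ℕ) (r : ℕ) (lam : ℝ) : ℕ :=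
  Module.finrank ℝ
    (LinearMap.ker ((BAdjMatrix b r).mulVecLin - lam • LinearMap.id))

noncomputable def Nprod (c : ℕ → ℕ) (m : ℕ) : ℕ := ∏ i ∈ Finset.range m, c i

lemma card_BVertex (c : ℕ → ℕ) (r : ℕ) :
    Fintype.card (BVertex c r) = ∑ m ∈ Finset.range (r+1), Nprod c m := by
  rw [Fintype.card_sigma]
  rw [Fin.sum_univ_eq_sum_range (fun m => Fintype.card ((i : Fin m) → Fin (c i)))]
  refine Finset.sum_congr rfl fun m _ => ?_
  rw [Fintype.card_pi, Nprod, ← Fin.prod_univ_eq_prod_range]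
  simp

section Ker
variable (c : ℕ → ℕ) (m : ℕ)

/-- sum over children -/
noncomputable def Smap : (((i : Fin (m+1)) → Fin (c i)) → ℝ) →ₗ[ℝ] (((i : Fin m) → Fin (c i)) → ℝ) where
  toFun v := fun p => ∑ j : Fin (c m), v (Fin.snoc p j)
  map_add' u v := by funext p; simp [Finset.sum_add_distrib]
  map_smul' a v := by funext p; simp [Finset.mul_sum]

/-- extend by zero to the tree -/
noncomputable def Emap : (((i : Fin (m+1)) → Fin (c i)) → ℝ) →ₗ[ℝ] (BVertex c (m+1) → ℝ) where
  toFun v := fun x => if h : (x.1 : ℕ) = m + 1 then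
      v (fun i : Fin (m+1) => x.2 ⟨(i : ℕ), by omega⟩) else 0
  map_add' u v := by funext x; by_cases h : (x.1 : ℕ) = m + 1 <;> simp [h]
  map_smul' a v := by funext x; by_cases h : (x.1 : ℕ) = m + 1 <;> simp [h]

lemma Emap_ker {v : ((i : Fin (m+1)) → Fin (c i)) → ℝ} (hv : Smap c m v = 0) :
    (BAdjMatrix c (m+1)).mulVec (Emap c m v) = 0 := by
  funext x
  classical
  obtain ⟨⟨k, hk⟩, q⟩ := x
  have hterm : ∀ y : BVertex c (m+1),
      BAdjMatrix c (m+1) ⟨⟨k, hk⟩, q⟩ y * Emap c m v y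
        = if h : (y.1 : ℕ) = m + 1 ∧ BAdj ⟨⟨k, hk⟩, q⟩ y then
            v (fun i : Fin (m+1) => y.2 ⟨(i : ℕ), by omega⟩) else 0 := by
    intro y
    simp only [BAdjMatrix, Emap, LinearMap.coe_mk, AddHom.coe_mk]
    by_cases h1 : BAdj ⟨⟨k, hk⟩, q⟩ y <;> by_cases h2 : (y.1 : ℕ) = m + 1 <;>
      simp [h1, h2]
  show (∑ y, BAdjMatrix c (m+1) ⟨⟨k, hk⟩, q⟩ y * Emap c m v y) = 0
  simp only [hterm]
  by_cases hx : k = m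
  · subst hx
    set ch : Fin (c k) → BVertex c (k+1) := fun j =>
      ⟨⟨k+1, by omega⟩, Fin.snoc q j⟩ with hch
    have hchinj : Function.Injective ch := by
      intro a b hab
      have h2 := eq_of_heq (Sigma.mk.inj_iff.mp hab).2
      have h4 := congrFun h2 (Fin.last k)
      simpa using h4
    have hcond : ∀ j : Fin (c k),
        ((ch j).1 : ℕ) = k + 1 ∧ BAdj ⟨⟨k, hk⟩, q⟩ (ch j) := by
      intro j
      refine ⟨rfl, Or.inl ⟨rfl, fun i => ?_⟩⟩
      show (Fin.snoc q j : (i : Fin (k+1)) → Fin (c i)) (Fin.castSucc i) = q i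
      simp
    have hfe : ∀ j : Fin (c k),
        (if h : ((ch j).1 : ℕ) = k + 1 ∧ BAdj ⟨⟨k, hk⟩, q⟩ (ch j) then
            v (fun i : Fin (k+1) => (ch j).2 ⟨(i : ℕ), by omega⟩) else 0)
          = v (Fin.snoc q j) := by
      intro j
      rw [dif_pos (hcond j)]
    have hzero : ∀ y ∈ (Finset.univ : Finset (BVertex c (k+1))),
        y ∉ Finset.univ.image ch →
        (if h : (y.1 : ℕ) = k + 1 ∧ BAdj ⟨⟨k, hk⟩, q⟩ y then
            v (fun i : Fin (k+1) => y.2 ⟨(i : ℕ), by omega⟩) else 0) = 0 := by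
      rintro ⟨⟨l, hl⟩, g⟩ - hy
      refine dif_neg ?_
      rintro ⟨h1, h2⟩
      have h1' : l = k + 1 := h1
      subst h1'
      apply hy
      rcases h2 with ⟨he, hagree⟩ | ⟨he, -⟩
      · simp only [Finset.mem_image, Finset.mem_univ, true_and]
        refine ⟨g ⟨k, Nat.lt_succ_self k⟩, ?_⟩
        simp only [hch]
        congr 1
        funext i
        refine Fin.lastCases ?_ (fun i => ?_) i
        · rw [Fin.snoc_last]; rfl
        · rw [Fin.snoc_castSucc]
          exact (hagree i).symm
      · have he' : k = k + 1 + 1 := he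
        omega
    calc (∑ y, if h : (y.1 : ℕ) = k + 1 ∧ BAdj ⟨⟨k, hk⟩, q⟩ y then
            v (fun i : Fin (k+1) => y.2 ⟨(i : ℕ), by omega⟩) else 0)
        = ∑ y ∈ Finset.univ.image ch,
            (if h : (y.1 : ℕ) = k + 1 ∧ BAdj ⟨⟨k, hk⟩, q⟩ y then
            v (fun i : Fin (k+1) => y.2 ⟨(i : ℕ), by omega⟩) else 0) :=
          (Finset.sum_subset (Finset.subset_univ _) hzero).symm
      _ = ∑ j : Fin (c k), (if h : ((ch j).1 : ℕ) = k + 1 ∧ BAdj ⟨⟨k, hk⟩, q⟩ (ch j) then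
            v (fun i : Fin (k+1) => (ch j).2 ⟨(i : ℕ), by omega⟩) else 0) :=
          Finset.sum_image (fun a _ b _ h => hchinj h)
      _ = ∑ j : Fin (c k), v (Fin.snoc q j) := Finset.sum_congr rfl fun j _ => hfe j
      _ = Smap c k v q := rfl
      _ = 0 := by rw [hv]; rfl
  · refine Finset.sum_eq_zero fun y _ => ?_
    refine dif_neg ?_
    rintro ⟨h1, h2⟩
    rcases h2 with ⟨he, -⟩ | ⟨he, -⟩
    · have he' : (y.1 : ℕ) = k + 1 := he
      omega
    · have he' : k = (y.1 : ℕ) + 1 := he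
      have : (y.1 : ℕ) < m + 2 := y.1.isLt
      omega

end Ker

section KerDim
variable (c : ℕ → ℕ) (m : ℕ)

noncomputable def adjEigDim' (b : ℕ → ℕ) (r : ℕ) (lam : ℝ) : ℕ :=
  Module.finrank ℝ
    (LinearMap.ker ((BAdjMatrix b r).mulVecLin - lam • LinearMap.id))

lemma adjEigDimZero (r : ℕ) :
    adjEigDim c r 0 = Module.finrank ℝ (LinearMap.ker (BAdjMatrix c r).mulVecLin) := by
  unfold adjEigDim
  rw [zero_smul, sub_zero]

lemma adjEigDimLe (r : ℕ) : adjEigDim c r 0 ≤ Fintype.card (BVertex c r) := by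
  rw [adjEigDimZero]
  calc Module.finrank ℝ (LinearMap.ker (BAdjMatrix c r).mulVecLin)
      ≤ Module.finrank ℝ (BVertex c r → ℝ) := Submodule.finrank_le _
    _ = Fintype.card (BVertex c r) := Module.finrank_fintype_fun_eq_card ℝ

lemma Emap_inj : Function.Injective (Emap c m) := by
  intro u w h
  funext g
  have := congrFun h (⟨⟨m+1, Nat.lt_succ_self _⟩, g⟩ : BVertex c (m+1))
  simpa [Emap] using this

lemma adjEigDimLower :
    Nprod c (m+1) ≤ adjEigDim c (m+1) 0 + Nprod c m := by
  classical
  set K := LinearMap.ker (Smap c m) with hK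
  have hsub : ∀ v ∈ K, Emap c m v ∈ LinearMap.ker (BAdjMatrix c (m+1)).mulVecLin := by
    intro v hv
    have := Emap_ker c m (LinearMap.mem_ker.mp hv)
    simpa [LinearMap.mem_ker, Matrix.mulVecLin_apply] using this
  let F : K →ₗ[ℝ] LinearMap.ker (BAdjMatrix c (m+1)).mulVecLin :=
    LinearMap.codRestrict _ ((Emap c m).comp K.subtype) (fun x => hsub x.1 x.2)
  have hFinj : Function.Injective F := by
    intro a b hab
    have : Emap c m a.1 = Emap c m b.1 := congrArg Subtype.val hab
    exact Subtype.ext (Emap_inj c m this)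
  have h1 : Module.finrank ℝ K ≤ adjEigDim c (m+1) 0 := by
    rw [adjEigDimZero]
    exact LinearMap.finrank_le_finrank_of_injective hFinj
  have h2 : Module.finrank ℝ (LinearMap.range (Smap c m)) + Module.finrank ℝ K
      = Nprod c (m+1) := by
    rw [hK, LinearMap.finrank_range_add_finrank_ker,
      Module.finrank_fintype_fun_eq_card, Fintype.card_pi]
    simp [Nprod, ← Fin.prod_univ_eq_prod_range]
  have h3 : Module.finrank ℝ (LinearMap.range (Smap c m)) ≤ Nprod c m := by
    calc Module.finrank ℝ (LinearMap.range (Smap c m))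
        ≤ Module.finrank ℝ (((i : Fin m) → Fin (c i)) → ℝ) := Submodule.finrank_le _
      _ = Nprod c m := by
          rw [Module.finrank_fintype_fun_eq_card, Fintype.card_pi]
          simp [Nprod, ← Fin.prod_univ_eq_prod_range]
  omega

end KerDim

section Final
variable {c : ℕ → ℕ}

lemma c_ge (hpos : ∀ i, 0 < c i) (hmono : StrictMono c) (k : ℕ) : k + 1 ≤ c k := by
  induction k with
  | zero => exact hpos 0
  | succ n ih =>
    have h : c n < c (n + 1) := hmono (by omega)
    omega

lemma Nprod_pos (hpos : ∀ i, 0 < c i) (k : ℕ) : 0 < Nprod c k := Finset.prod_pos fun i _ => hpos i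

lemma Tsum_le (hpos : ∀ i, 0 < c i) (hmono : StrictMono c) : ∀ k, 1 ≤ k → ∑ j ∈ Finset.range (k+1), Nprod c j ≤ 2 * Nprod c k := by
  intro k hk
  induction k with
  | zero => omega
  | succ n ih =>
    rcases Nat.eq_or_lt_of_le hk with h1 | h1
    · -- n + 1 = 1, i.e. n = 0
      have hn : n = 0 := by omega
      subst hn
      have h0 : Nprod c 0 = 1 := by simp [Nprod]
      have h1' : Nprod c 1 = c 0 := by simp [Nprod]
      have := hpos 0
      simp [Finset.sum_range_succ, h0, h1']
      omega
    · have hn : 1 ≤ n := by omega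
      have ih' := ih hn
      have hsucc : Nprod c (n+1) = Nprod c n * c n := Finset.prod_range_succ _ _
      have hc : 2 ≤ c n := by have := c_ge hpos hmono n; omega
      have h2 : 2 * Nprod c n ≤ Nprod c (n+1) := by
        rw [hsucc]
        calc 2 * Nprod c n = Nprod c n * 2 := by ring
          _ ≤ Nprod c n * c n := Nat.mul_le_mul_left _ hc
      rw [Finset.sum_range_succ]
      omega

theorem mainAux (hpos : ∀ i, 0 < c i) (hmono : StrictMono c) :
    Filter.Tendsto
      (fun n : ℕ => (adjEigDim c n 0 : ℝ) / (Fintype.card (BVertex c n) : ℝ))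
      Filter.atTop (nhds 1) := by
  have hlim : Filter.Tendsto (fun n : ℕ => 1 - 3 / (n : ℝ)) Filter.atTop (nhds 1) := by
    have := (tendsto_const_div_atTop_nhds_zero_nat (3:ℝ))
    have h2 := Filter.Tendsto.sub (tendsto_const_nhds (x := (1:ℝ))
      (f := Filter.atTop (α := ℕ))) this
    simpa using h2
  refine tendsto_of_tendsto_of_tendsto_of_le_of_le' hlim tendsto_const_nhds ?_ ?_
  · -- lower bound, eventually
    filter_upwards [Filter.eventually_ge_atTop 2] with n hn
    obtain ⟨m, rfl⟩ : ∃ m, n = m + 2 := ⟨n - 2, by omega⟩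
    set a := adjEigDim c (m+2) 0 with ha
    set V := Fintype.card (BVertex c (m+2)) with hV
    have hVsum : V = ∑ j ∈ Finset.range (m+3), Nprod c j := card_BVertex c (m+2)
    have hlow : Nprod c (m+2) ≤ a + Nprod c (m+1) := adjEigDimLower c (m+1)
    have hT : ∑ j ∈ Finset.range (m+2), Nprod c j ≤ 2 * Nprod c (m+1) :=
      Tsum_le hpos hmono (m+1) (by omega)
    have hVle : V ≤ a + 3 * Nprod c (m+1) := by
      rw [hVsum, Finset.sum_range_succ]
      omega
    have hNN : Nprod c (m+2) = Nprod c (m+1) * c (m+1) := Finset.prod_range_succ _ _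
    have hcge : m + 2 ≤ c (m+1) := c_ge hpos hmono (m+1)
    have hNV : Nprod c (m+2) ≤ V := by
      rw [hVsum]
      exact Finset.single_le_sum (f := fun j => Nprod c j)
        (fun i _ => Nat.zero_le _) (Finset.self_mem_range_succ (m+2))
    have h2 : (m+2) * Nprod c (m+1) ≤ V := by
      calc (m+2) * Nprod c (m+1) ≤ c (m+1) * Nprod c (m+1) :=
            Nat.mul_le_mul_right _ hcge
        _ = Nprod c (m+2) := by rw [hNN]; ring
        _ ≤ V := hNV
    have hVpos : (0:ℝ) < V := by
      have := Nprod_pos hpos (m+2)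
      exact_mod_cast lt_of_lt_of_le this hNV
    have hnpos : (0:ℝ) < ((m+2 : ℕ) : ℝ) := by positivity
    have hkey : (V:ℝ) - a ≤ 3 * Nprod c (m+1) := by
      have hcast : (V:ℝ) ≤ (a:ℝ) + 3 * (Nprod c (m+1):ℝ) := by exact_mod_cast hVle
      linarith
    have hkey2 : (Nprod c (m+1) : ℝ) ≤ V / ((m+2:ℕ):ℝ) := by
      rw [le_div_iff₀ hnpos]
      calc (Nprod c (m+1):ℝ) * ((m+2:ℕ):ℝ)
          = (((Nprod c (m+1)) * (m+2) : ℕ) : ℝ) := by push_cast; ring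
        _ ≤ V := by exact_mod_cast (by rw [Nat.mul_comm]; exact h2 : Nprod c (m+1) * (m+2) ≤ V)
    have hfinal : (V:ℝ) - 3 * (V / ((m+2:ℕ):ℝ)) ≤ a := by linarith
    have heq : 1 - 3 / (((m+2:ℕ)):ℝ) = ((V:ℝ) - 3 * (V / ((m+2:ℕ):ℝ))) / V := by
      field_simp
    rw [heq]
    exact div_le_div_of_nonneg_right hfinal hVpos.le
  · filter_upwards with n
    have hle : adjEigDim c n 0 ≤ Fintype.card (BVertex c n) := adjEigDimLe c n
    rcases Nat.eq_zero_or_pos (Fintype.card (BVertex c n)) with h | h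
    · simp [h]
    · rw [div_le_one (by exact_mod_cast h)]
      exact_mod_cast hle

end Final


/-- Let `c : ℕ → ℕ` be a strictly increasing sequence of positive
integers and, for `n ≥ 1`, let `X^{(c)}_n` be the rooted tree of depth `n` in which
every vertex at depth `i < n` has `c i` children. Then the dimension of the kernel
of the adjacency matrix of `X^{(c)}_n` (the multiplicity of the eigenvalue `0`),
divided by the number of vertices, converges to `1` as `n → ∞`. -/
theorem zero_eigenvalue_dominates (c : ℕ → ℕ) (hpos : ∀ i, 0 < c i)
    (hmono : StrictMono c) :
    Filter.Tendsto
      (fun n : ℕ => (adjEigDim c n 0 : ℝ) / (Fintype.card (BVertex c n) : ℝ))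
      Filter.atTop (nhds 1) := by
  exact mainAux hpos hmono
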